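/- Let s > 0 and a ∈ ℝ. Then the family (E'_{I,J,K}(a,s))_{(I,J,K) ∈ ℤ³} is absolutely summable, the limit by expanding rectangles lim_{(I,J,K)→∞} S_{Π_{I,J,K}}(a,s) exists (i.e. there is L ∈ ℝ such that for every ε > 0 there is N₀ with |S_{Π_{I,J,K}}(a,s) - L| < ε whenever min{I,J,K} ≥ N₀), and this limit equals ∑_{(I,J,K) ∈ ℤ³} E'_{I,J,K}(a,s). -/

import Mathlib

/-
Pairing every coordinate as `{2n, 2n + 1}` turns the alternating sums into mixed finite
differences of `(a² + ‖x‖²) ^ (-s)` over unit cubes. By the mean value theorem in each variable,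
a mixed difference of order `k` is bounded by the supremum over the cube of
`2ᵏ s (s + 1) ⋯ (s + k - 1) |x₁ ⋯ x_k| (a² + ‖x‖²) ^ (-s - k)`, hence by
`O((a² + d²) ^ (-s - k/2))`, where `d` is the distance from `0` to the cube.

For `k = 3` this gives `E'_{m,n,p} = O((1 + m² + n² + p²) ^ (-s - 3/2))`, summable over `ℤ³`.
The interval `[-I, I]` is a run of pairs plus one point `±I`, so `S_Π` differs from a finite sum
of the `E'` by three slabs, each an alternating double sum with one coordinate frozen at some `e`
with `|e| ∈ {I, J, K}`. Pairing the two free coordinates leaves differences of order `2`, `1`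
and `0`, all summable with a factor `(a² + e²) ^ (-s/2) ≤ |e| ^ (-s)`, so the slabs vanish in
the limit and `S_Π → ∑ E'`.
-/

open scoped BigOperators

/-- `S_{Π_{I,J,K}}(a,s)`: the alternating lattice sum over the nonzero integer points of the
rectangle `Π_{I,J,K} = [-I,I] × [-J,J] × [-K,K]`. -/
noncomputable def Spi (a s : ℝ) (I J K : ℕ) : ℝ :=
  ∑ p ∈ ((Finset.Icc (-(I : ℤ)) (I : ℤ)) ×ˢ (Finset.Icc (-(J : ℤ)) (J : ℤ)) ×ˢ
      (Finset.Icc (-(K : ℤ)) (K : ℤ))).filter (fun p : ℤ × ℤ × ℤ => p ≠ 0),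
    (-1 : ℝ) ^ (p.1 + p.2.1 + p.2.2) *
      (a ^ 2 + (p.1 : ℝ) ^ 2 + (p.2.1 : ℝ) ^ 2 + (p.2.2 : ℝ) ^ 2) ^ (-s)

/-- `E'_{I,J,K}(a,s)`: the alternating block sum over the 8 corners of the cube
`Q_{2I,2J,2K}`, with the term at the origin omitted. -/
noncomputable def Eblock (a s : ℝ) (I J K : ℤ) : ℝ :=
  ∑ i ∈ Finset.Icc (2 * I) (2 * I + 1), ∑ j ∈ Finset.Icc (2 * J) (2 * J + 1),
    ∑ k ∈ Finset.Icc (2 * K) (2 * K + 1),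
      if (i, j, k) = ((0 : ℤ), (0 : ℤ), (0 : ℤ)) then 0
      else (-1 : ℝ) ^ (i + j + k) *
        (a ^ 2 + (i : ℝ) ^ 2 + (j : ℝ) ^ 2 + (k : ℝ) ^ 2) ^ (-s)

open Finset Filter Topology Metric

theorem abs_sub_add_one_le_of_hasDerivAt {g g' : ℝ → ℝ} {c B : ℝ}
    (hg : ∀ x ∈ Set.Icc c (c + 1), HasDerivAt g (g' x) x)
    (hB : ∀ x ∈ Set.Icc c (c + 1), |g' x| ≤ B) : |g c - g (c + 1)| ≤ B := by
  have := norm_image_sub_le_of_norm_deriv_le_segment' (fun x hx => (hg x hx).hasDerivWithinAt)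
    (fun x hx => hB x (Set.Ico_subset_Icc_self hx)) (c + 1) (by simp)
  simpa [abs_sub_comm] using this

theorem abs_mul_rpow_neg_le {x U : ℝ} (p : ℝ) (hU : 0 < U) (hx : x ^ 2 ≤ U) :
    |x| * U ^ (-(p + 1 / 2)) ≤ U ^ (-p) := by
  have hxU : |x| ≤ U ^ (1 / 2 : ℝ) := by
    rw [← Real.sqrt_eq_rpow]; exact Real.abs_le_sqrt hx
  calc |x| * U ^ (-(p + 1 / 2)) ≤ U ^ (1 / 2 : ℝ) * U ^ (-(p + 1 / 2)) := by gcongr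
    _ = U ^ (-p) := by rw [← Real.rpow_add hU]; ring_nf

/-- The mixed difference, one unit step in each coordinate, of `x ↦ (q + ‖x‖²) ^ (-r)` over the
cube `∏ᵢ [cᵢ, cᵢ + 1]`. -/
noncomputable def cubeDiff (r : ℝ) : List ℝ → ℝ → ℝ
  | [], q => q ^ (-r)
  | c :: cs, q => cubeDiff r cs (q + c ^ 2) - cubeDiff r cs (q + (c + 1) ^ 2)

/-- The squared distance from `0` to the cube `∏ᵢ [cᵢ, cᵢ + 1]`. -/
noncomputable def cubeGap (cs : List ℝ) : ℝ :=
  (cs.map fun c => infDist (0 : ℝ) (Set.Icc c (c + 1)) ^ 2).sum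

theorem cubeGap_cons (c : ℝ) (cs : List ℝ) :
    cubeGap (c :: cs) = infDist (0 : ℝ) (Set.Icc c (c + 1)) ^ 2 + cubeGap cs := by
  simp [cubeGap]

theorem cubeGap_nonneg (cs : List ℝ) : 0 ≤ cubeGap cs :=
  List.sum_nonneg (by simp only [List.mem_map]; rintro _ ⟨c, -, rfl⟩; positivity)

theorem infDist_sq_le {c x : ℝ} (hx : x ∈ Set.Icc c (c + 1)) :
    infDist (0 : ℝ) (Set.Icc c (c + 1)) ^ 2 ≤ x ^ 2 := by
  have h := infDist_le_dist_of_mem (x := (0 : ℝ)) hx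
  rw [Real.dist_eq, zero_sub, abs_neg] at h
  simpa using pow_le_pow_left₀ infDist_nonneg h 2

theorem sq_le_infDist_Icc_sq (n : ℤ) :
    (n : ℝ) ^ 2 ≤ infDist (0 : ℝ) (Set.Icc (2 * (n : ℝ)) (2 * n + 1)) ^ 2 := by
  have h : |(n : ℝ)| ≤ infDist (0 : ℝ) (Set.Icc (2 * (n : ℝ)) (2 * n + 1)) := by
    refine (le_infDist (Set.nonempty_Icc.2 (by linarith))).2 fun y ⟨hy₁, hy₂⟩ => ?_
    rw [Real.dist_eq, zero_sub, abs_neg]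
    rcases le_or_gt 0 n with hn | hn
    · have : (0 : ℝ) ≤ n := by exact_mod_cast hn
      rw [abs_of_nonneg this, abs_of_nonneg (by linarith)]; linarith
    · have : (n : ℝ) ≤ -1 := by exact_mod_cast (show n ≤ -1 by omega)
      rw [abs_of_neg (by linarith), abs_of_neg (by linarith)]; linarith
  simpa [sq_abs] using pow_le_pow_left₀ (abs_nonneg _) h 2

theorem hasDerivAt_cubeDiff (r : ℝ) (cs : List ℝ) {q x : ℝ} (h : 0 < q + x ^ 2 + cubeGap cs) :
    HasDerivAt (fun y => cubeDiff r cs (q + y ^ 2)) (-2 * r * x * cubeDiff (r + 1) cs (q + x ^ 2))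
      x := by
  induction cs generalizing q with
  | nil =>
    have hq : 0 < q + x ^ 2 := by simpa [cubeGap] using h
    simp only [cubeDiff]
    convert ((hasDerivAt_pow 2 x).const_add q).rpow_const (p := -r) (Or.inl hq.ne') using 1
    rw [show -r - 1 = -(r + 1) by ring]; push_cast; ring
  | cons c cs ih =>
    rw [cubeGap_cons] at h
    have hc := infDist_sq_le (Set.left_mem_Icc.2 (by linarith : c ≤ c + 1))
    have hc' := infDist_sq_le (Set.right_mem_Icc.2 (by linarith : c ≤ c + 1))
    have h₁ := ih (q := q + c ^ 2) (by linarith)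
    have h₂ := ih (q := q + (c + 1) ^ 2) (by linarith)
    have e : (fun y => cubeDiff r (c :: cs) (q + y ^ 2)) =
        fun y => cubeDiff r cs (q + c ^ 2 + y ^ 2) - cubeDiff r cs (q + (c + 1) ^ 2 + y ^ 2) := by
      funext y; simp only [cubeDiff, add_right_comm q (y ^ 2)]
    rw [e]
    refine (h₁.sub h₂).congr_deriv ?_
    simp only [cubeDiff, add_right_comm q (x ^ 2)]; ring

theorem abs_cubeDiff_le {r : ℝ} (hr : 0 < r) (cs : List ℝ) {q : ℝ} (hq : 0 ≤ q)
    (hpos : 0 < q + cubeGap cs) :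
    |cubeDiff r cs q| ≤
      2 ^ cs.length * (ascPochhammer ℝ cs.length).eval r *
        (q + cubeGap cs) ^ (-(r + cs.length / 2)) := by
  induction cs generalizing r q with
  | nil =>
    simp only [cubeDiff, cubeGap, List.map_nil, List.sum_nil, add_zero] at hpos ⊢
    simp [abs_of_nonneg (Real.rpow_nonneg hq _)]
  | cons c cs ih =>
    rw [cubeGap_cons] at hpos ⊢
    have hG := cubeGap_nonneg cs
    have hP := ascPochhammer_pos cs.length (r + 1) (by linarith)
    -- Mean value theorem in the first coordinate: the derivative is `-2rx` times a difference of
    -- one order less for `r + 1`, and the factor `|x|` costs half a power of the base.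
    apply abs_sub_add_one_le_of_hasDerivAt (fun x hx => hasDerivAt_cubeDiff r cs (by
      nlinarith [infDist_sq_le hx]))
    intro x hx
    have hdx := infDist_sq_le hx
    have hU : 0 < q + x ^ 2 + cubeGap cs := by linarith
    have ih' := ih (by linarith : 0 < r + 1) (by positivity : 0 ≤ q + x ^ 2) hU
    calc |-2 * r * x * cubeDiff (r + 1) cs (q + x ^ 2)|
        = 2 * r * (|x| * |cubeDiff (r + 1) cs (q + x ^ 2)|) := by
          rw [abs_mul, abs_mul, abs_of_nonpos (by linarith : -2 * r ≤ 0)]; ring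
      _ ≤ 2 * r * (|x| * (2 ^ cs.length * (ascPochhammer ℝ cs.length).eval (r + 1) *
            (q + x ^ 2 + cubeGap cs) ^ (-(r + 1 + cs.length / 2)))) := by gcongr
      _ = 2 ^ (cs.length + 1) * (r * (ascPochhammer ℝ cs.length).eval (r + 1)) *
            (|x| * (q + x ^ 2 + cubeGap cs) ^ (-((r + (cs.length + 1) / 2) + 1 / 2))) := by
          ring_nf
      _ ≤ 2 ^ (cs.length + 1) * (r * (ascPochhammer ℝ cs.length).eval (r + 1)) *
            (q + x ^ 2 + cubeGap cs) ^ (-(r + (cs.length + 1) / 2)) := by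
          gcongr; exact abs_mul_rpow_neg_le _ hU (by nlinarith)
      _ ≤ 2 ^ (c :: cs).length * (ascPochhammer ℝ (c :: cs).length).eval r *
            (q + (infDist 0 (Set.Icc c (c + 1)) ^ 2 + cubeGap cs)) ^
              (-(r + (c :: cs).length / 2)) := by
          simp only [List.length_cons, ascPochhammer_succ_left, Polynomial.eval_mul,
            Polynomial.eval_X, Polynomial.eval_comp, Polynomial.eval_add, Polynomial.eval_one]
          push_cast
          gcongr ?_ * ?_
          exact Real.rpow_le_rpow_of_nonpos (by linarith) (by linarith)
            (neg_nonpos.2 (by positivity))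

theorem rpow_neg_add_le_mul {w ρ U α β : ℝ} (hw : 1 ≤ w) (hρ : 0 ≤ ρ) (hU : w + ρ ≤ U)
    (hα : 0 ≤ α) (hβ : 0 ≤ β) : U ^ (-(α + β)) ≤ w ^ (-α) * (1 + ρ) ^ (-β) := by
  rw [neg_add, Real.rpow_add (by linarith)]
  exact mul_le_mul (Real.rpow_le_rpow_of_nonpos (by linarith) (by linarith) (by linarith))
    (Real.rpow_le_rpow_of_nonpos (by linarith) (by linarith) (by linarith))
    (Real.rpow_nonneg (by linarith) _) (Real.rpow_nonneg (by linarith) _)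

theorem summable_one_add_sq_rpow_neg {t : ℝ} (ht : 1 / 2 < t) :
    Summable fun n : ℤ => (1 + (n : ℝ) ^ 2) ^ (-t) := by
  refine Summable.of_norm_bounded_eventually (Real.summable_abs_int_rpow (b := 2 * t)
    (by linarith)) ?_
  filter_upwards [eventually_cofinite_ne 0] with n hn
  have hn' : 0 < |(n : ℝ)| := by positivity
  rw [Real.norm_of_nonneg (by positivity), show -(2 * t) = 2 * -t by ring,
    Real.rpow_mul hn'.le, Real.rpow_two, sq_abs]
  exact Real.rpow_le_rpow_of_nonpos (by positivity) (by linarith) (by linarith)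

theorem Summable.one_add_add_rpow_neg {X Y : Type*} {f : X → ℝ} {g : Y → ℝ} {α β : ℝ}
    (hf0 : ∀ x, 0 ≤ f x) (hg0 : ∀ y, 0 ≤ g y) (hα : 0 ≤ α) (hβ : 0 ≤ β)
    (hf : Summable fun x => (1 + f x) ^ (-α)) (hg : Summable fun y => (1 + g y) ^ (-β)) :
    Summable fun p : X × Y => (1 + f p.1 + g p.2) ^ (-(α + β)) :=
  (hf.mul_of_nonneg hg (fun x => by have := hf0 x; positivity)
    (fun y => by have := hg0 y; positivity)).of_nonneg_of_le
    (fun p => by have := hf0 p.1; have := hg0 p.2; positivity)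
    fun p => rpow_neg_add_le_mul (by linarith [hf0 p.1]) (hg0 p.2) le_rfl hα hβ

theorem summable_one_add_sq_add_sq_rpow_neg {t : ℝ} (ht : 1 < t) :
    Summable fun v : ℤ × ℤ => (1 + (v.1 : ℝ) ^ 2 + (v.2 : ℝ) ^ 2) ^ (-t) := by
  have h := summable_one_add_sq_rpow_neg (t := t / 2) (by linarith)
  have := h.one_add_add_rpow_neg (fun n : ℤ => sq_nonneg (n : ℝ))
    (fun n : ℤ => sq_nonneg (n : ℝ)) (by positivity) (by positivity) h
  rwa [add_halves] at this

theorem summable_one_add_sq_add_sq_add_sq_rpow_neg {t : ℝ} (ht : 3 / 2 < t) :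
    Summable fun v : ℤ × ℤ × ℤ =>
      (1 + (v.1 : ℝ) ^ 2 + (v.2.1 : ℝ) ^ 2 + (v.2.2 : ℝ) ^ 2) ^ (-t) := by
  have h₁ := summable_one_add_sq_rpow_neg (t := t / 3) (by linarith)
  have h₂ := (summable_one_add_sq_add_sq_rpow_neg (t := 2 * t / 3) (by linarith)).congr
    fun v => by rw [add_assoc]
  have := h₁.one_add_add_rpow_neg (g := fun v : ℤ × ℤ => (v.1 : ℝ) ^ 2 + (v.2 : ℝ) ^ 2)
    (fun n : ℤ => sq_nonneg (n : ℝ)) (fun v => by positivity) (by positivity) (by positivity) h₂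
  simpa only [← add_assoc, show t / 3 + 2 * t / 3 = t by ring] using this

theorem abs_sum_le_tsum {ι : Type*} {f g : ι → ℝ} (hg : Summable g) (h : ∀ i, |f i| ≤ g i)
    (S : Finset ι) : |∑ i ∈ S, f i| ≤ ∑' i, g i :=
  (abs_sum_le_sum_abs _ _).trans <| (sum_le_sum fun i _ => h i).trans <|
    hg.sum_le_tsum _ fun i _ => (abs_nonneg _).trans (h i)

theorem abs_sum_le_of_card_le_one {ι : Type*} {E : Finset ι} (hE : E.card ≤ 1) {f : ι → ℝ}
    {B : ℝ} (hB : 0 ≤ B) (h : ∀ i, |f i| ≤ B) : |∑ i ∈ E, f i| ≤ B :=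
  (abs_sum_le_sum_abs _ _).trans <| (sum_le_card_nsmul _ _ _ fun i _ => h i).trans <| by
    rw [nsmul_eq_mul]; exact mul_le_of_le_one_left hB (by exact_mod_cast hE)

theorem sum_Icc_two_mul {M : Type*} [AddCommMonoid M] (h : ℤ → M) (lo hi : ℤ) :
    ∑ i ∈ Icc (2 * lo) (2 * hi + 1), h i =
      ∑ n ∈ Icc lo hi, ∑ i ∈ Icc (2 * n) (2 * n + 1), h i := by
  rw [← sum_biUnion]
  · congr 1
    ext i
    simp only [mem_biUnion, mem_Icc]
    exact ⟨fun hi' => ⟨i / 2, by omega, by omega⟩, fun ⟨n, hn, hi'⟩ => by omega⟩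
  · intro m _ n _ hmn
    simp only [Function.onFun, disjoint_left, mem_Icc]
    omega

theorem sum_Icc_two_mul_neg_one_zpow (F : ℤ → ℝ) (n : ℤ) :
    ∑ y ∈ Icc (2 * n) (2 * n + 1), (-1 : ℝ) ^ y * F y = F (2 * n) - F (2 * n + 1) := by
  have : Icc (2 * n) (2 * n + 1) = {2 * n, 2 * n + 1} := by
    ext i; simp only [mem_Icc, mem_insert, mem_singleton]; omega
  rw [this, sum_pair (by omega), zpow_add_one₀ (by norm_num), zpow_mul]
  norm_num
  ring

theorem sum_alt_eq_cubeDiff (s q : ℝ) (n : ℤ) :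
    ∑ y ∈ Icc (2 * n) (2 * n + 1), (-1 : ℝ) ^ y * (q + (y : ℝ) ^ 2) ^ (-s) =
      cubeDiff s [2 * n] q := by
  rw [sum_Icc_two_mul_neg_one_zpow (fun y : ℤ => (q + (y : ℝ) ^ 2) ^ (-s))]
  simp [cubeDiff]

theorem sum_sum_alt_eq_cubeDiff (s q : ℝ) (n p : ℤ) :
    ∑ y ∈ Icc (2 * n) (2 * n + 1), ∑ z ∈ Icc (2 * p) (2 * p + 1),
      (-1 : ℝ) ^ (y + z) * (q + (y : ℝ) ^ 2 + (z : ℝ) ^ 2) ^ (-s) =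
      cubeDiff s [2 * n, 2 * p] q := by
  simp_rw [zpow_add₀ (by norm_num : (-1 : ℝ) ≠ 0), mul_assoc, ← mul_sum, sum_alt_eq_cubeDiff]
  rw [sum_Icc_two_mul_neg_one_zpow (fun y : ℤ => cubeDiff s [2 * p] (q + (y : ℝ) ^ 2))]
  simp [cubeDiff]

theorem sum_sum_sum_alt_eq_cubeDiff (s q : ℝ) (m n p : ℤ) :
    ∑ x ∈ Icc (2 * m) (2 * m + 1), ∑ y ∈ Icc (2 * n) (2 * n + 1), ∑ z ∈ Icc (2 * p) (2 * p + 1),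
      (-1 : ℝ) ^ (x + y + z) * (q + (x : ℝ) ^ 2 + (y : ℝ) ^ 2 + (z : ℝ) ^ 2) ^ (-s) =
      cubeDiff s [2 * m, 2 * n, 2 * p] q := by
  have h : ∀ x y z : ℤ, (-1 : ℝ) ^ (x + y + z) = (-1) ^ x * (-1) ^ (y + z) := fun x y z => by
    rw [add_assoc, zpow_add₀ (by norm_num)]
  simp_rw [h, mul_assoc, ← mul_sum, sum_sum_alt_eq_cubeDiff]
  rw [sum_Icc_two_mul_neg_one_zpow (fun x : ℤ => cubeDiff s [2 * n, 2 * p] (q + (x : ℝ) ^ 2))]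
  simp [cubeDiff]

def IsPairedUpToPoint (A : Finset ℤ) : Prop :=
  ∃ (lo hi : ℤ) (E : Finset ℤ), E.card ≤ 1 ∧ Disjoint E (Icc (2 * lo) (2 * hi + 1)) ∧
    A = E ∪ Icc (2 * lo) (2 * hi + 1)

theorem isPairedUpToPoint_Icc (lo hi : ℤ) : IsPairedUpToPoint (Icc (2 * lo) (2 * hi + 1)) :=
  ⟨lo, hi, ∅, by simp, by simp, by simp⟩

theorem isPairedUpToPoint_insert {e lo hi : ℤ} (he : e ∉ Icc (2 * lo) (2 * hi + 1)) :
    IsPairedUpToPoint (insert e (Icc (2 * lo) (2 * hi + 1))) :=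
  ⟨lo, hi, {e}, by simp, by simpa using he, by rw [insert_eq]⟩

theorem exists_Icc_neg_eq_insert {I : ℤ} (hI : 0 ≤ I) :
    ∃ e, |e| = I ∧ e ∉ Icc (2 * -(I / 2)) (2 * ((I - 1) / 2) + 1) ∧
      Icc (-I) I = insert e (Icc (2 * -(I / 2)) (2 * ((I - 1) / 2) + 1)) := by
  rcases Int.emod_two_eq_zero_or_one I with h | h
  · refine ⟨I, abs_of_nonneg hI, by simp only [mem_Icc]; omega, ?_⟩
    ext i; simp only [mem_insert, mem_Icc]; omega
  · refine ⟨-I, by rw [abs_neg, abs_of_nonneg hI], by simp only [mem_Icc]; omega, ?_⟩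
    ext i; simp only [mem_insert, mem_Icc]; omega

theorem exists_abs_sum_alt_le {s : ℝ} (hs : 0 < s) :
    ∃ C, ∀ w u : ℝ, 1 ≤ w → 0 ≤ u → ∀ lo hi : ℤ,
      |∑ y ∈ Icc (2 * lo) (2 * hi + 1), (-1 : ℝ) ^ y * (w + u + (y : ℝ) ^ 2) ^ (-s)| ≤
        C * w ^ (-(s / 2)) := by
  have hsum := summable_one_add_sq_rpow_neg (t := s / 2 + 1 / 2) (by linarith)
  refine ⟨2 * s * ∑' n : ℤ, (1 + (n : ℝ) ^ 2) ^ (-(s / 2 + 1 / 2)), fun w u hw hu lo hi => ?_⟩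
  rw [sum_Icc_two_mul]
  simp_rw [sum_alt_eq_cubeDiff]
  refine (abs_sum_le_tsum (hsum.mul_left (2 * s * w ^ (-(s / 2)))) (fun n => ?_) _).trans
    (tsum_mul_left.trans (by ring)).le
  have hgap : (n : ℝ) ^ 2 ≤ cubeGap [2 * (n : ℝ)] := by
    simpa [cubeGap] using sq_le_infDist_Icc_sq n
  have hK := abs_cubeDiff_le hs [2 * (n : ℝ)] (by positivity : 0 ≤ w + u)
    (by linarith [cubeGap_nonneg [2 * (n : ℝ)]])
  simp only [List.length_singleton, Nat.cast_one, pow_one, ascPochhammer_one,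
    Polynomial.eval_X] at hK
  calc _ ≤ 2 * s * (w + u + cubeGap [2 * (n : ℝ)]) ^ (-(s / 2 + (s / 2 + 1 / 2))) := by
        convert hK using 3; ring
    _ ≤ 2 * s * (w ^ (-(s / 2)) * (1 + (n : ℝ) ^ 2) ^ (-(s / 2 + 1 / 2))) := by
        gcongr
        exact rpow_neg_add_le_mul hw (sq_nonneg _) (by linarith) (by positivity) (by positivity)
    _ = _ := by ring

theorem exists_abs_sum_sum_alt_le {s : ℝ} (hs : 0 < s) :
    ∃ C, ∀ w : ℝ, 1 ≤ w → ∀ lo hi lo' hi' : ℤ,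
      |∑ y ∈ Icc (2 * lo) (2 * hi + 1), ∑ z ∈ Icc (2 * lo') (2 * hi' + 1),
        (-1 : ℝ) ^ (y + z) * (w + (y : ℝ) ^ 2 + (z : ℝ) ^ 2) ^ (-s)| ≤ C * w ^ (-(s / 2)) := by
  have hsum := summable_one_add_sq_add_sq_rpow_neg (t := s / 2 + 1) (by linarith)
  set K := 2 ^ 2 * (ascPochhammer ℝ 2).eval s
  have hK : 0 < K := by have := ascPochhammer_pos 2 s hs; positivity
  refine ⟨K * ∑' v : ℤ × ℤ, (1 + (v.1 : ℝ) ^ 2 + (v.2 : ℝ) ^ 2) ^ (-(s / 2 + 1)),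
    fun w hw lo hi lo' hi' => ?_⟩
  have e : ∑ y ∈ Icc (2 * lo) (2 * hi + 1), ∑ z ∈ Icc (2 * lo') (2 * hi' + 1),
      (-1 : ℝ) ^ (y + z) * (w + (y : ℝ) ^ 2 + (z : ℝ) ^ 2) ^ (-s) =
      ∑ v ∈ Icc lo hi ×ˢ Icc lo' hi', cubeDiff s [2 * v.1, 2 * v.2] w := by
    rw [sum_product, sum_Icc_two_mul]
    refine sum_congr rfl fun n _ => ?_
    calc _ = ∑ y ∈ Icc (2 * n) (2 * n + 1), ∑ p ∈ Icc lo' hi', ∑ z ∈ Icc (2 * p) (2 * p + 1),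
          (-1 : ℝ) ^ (y + z) * (w + (y : ℝ) ^ 2 + (z : ℝ) ^ 2) ^ (-s) :=
          sum_congr rfl fun y _ => sum_Icc_two_mul _ lo' hi'
      _ = _ := by rw [sum_comm]; exact sum_congr rfl fun p _ => sum_sum_alt_eq_cubeDiff s w n p
  rw [e]
  refine (abs_sum_le_tsum (hsum.mul_left (K * w ^ (-(s / 2)))) (fun v => ?_) _).trans
    (tsum_mul_left.trans (by ring)).le
  have hgap : (v.1 : ℝ) ^ 2 + (v.2 : ℝ) ^ 2 ≤ cubeGap [2 * (v.1 : ℝ), 2 * v.2] := by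
    simpa [cubeGap] using add_le_add (sq_le_infDist_Icc_sq v.1) (sq_le_infDist_Icc_sq v.2)
  have hD := abs_cubeDiff_le hs [2 * (v.1 : ℝ), 2 * v.2] (by linarith : 0 ≤ w)
    (by linarith [cubeGap_nonneg [2 * (v.1 : ℝ), 2 * v.2]])
  simp only [List.length_cons, List.length_nil, zero_add, Nat.reduceAdd, Nat.cast_ofNat] at hD
  calc _ ≤ K * (w + cubeGap [2 * (v.1 : ℝ), 2 * v.2]) ^ (-(s / 2 + (s / 2 + 1))) := by
        convert hD using 3; ring_nf
    _ ≤ K * (w ^ (-(s / 2)) * (1 + ((v.1 : ℝ) ^ 2 + (v.2 : ℝ) ^ 2)) ^ (-(s / 2 + 1))) := by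
        gcongr
        exact rpow_neg_add_le_mul hw (by positivity) (by linarith) (by positivity) (by positivity)
    _ = _ := by rw [← add_assoc]; ring

theorem exists_abs_sum_sum_alt_le_of_isPairedUpToPoint {s : ℝ} (hs : 0 < s) :
    ∃ C, ∀ w : ℝ, 1 ≤ w → ∀ A B : Finset ℤ, IsPairedUpToPoint A → IsPairedUpToPoint B →
      |∑ y ∈ A, ∑ z ∈ B, (-1 : ℝ) ^ (y + z) * (w + (y : ℝ) ^ 2 + (z : ℝ) ^ 2) ^ (-s)| ≤
        C * w ^ (-(s / 2)) := by
  obtain ⟨C₁, h₁⟩ := exists_abs_sum_alt_le hs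
  obtain ⟨C₂, h₂⟩ := exists_abs_sum_sum_alt_le hs
  refine ⟨1 + C₁ + C₁ + C₂, fun w hw A B hA hB => ?_⟩
  obtain ⟨lo, hi, E, hE, hEd, rfl⟩ := hA
  obtain ⟨lo', hi', F, hF, hFd, rfl⟩ := hB
  set g : ℤ → ℤ → ℝ := fun y z => (-1 : ℝ) ^ (y + z) * (w + (y : ℝ) ^ 2 + (z : ℝ) ^ 2) ^ (-s)
  have hg : ∀ y z, g y z = g z y := fun y z => by simp only [g, add_comm y, add_right_comm w]
  have hpt : ∀ y z, |g y z| ≤ w ^ (-(s / 2)) := fun y z => by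
    rw [abs_mul, abs_neg_one_zpow, one_mul, abs_of_nonneg (by positivity)]
    calc _ ≤ w ^ (-s) := Real.rpow_le_rpow_of_nonpos (by linarith) (by nlinarith) (by linarith)
      _ ≤ w ^ (-(s / 2)) := Real.rpow_le_rpow_of_exponent_le hw (by linarith)
  have hline : ∀ y lo hi, |∑ z ∈ Icc (2 * lo) (2 * hi + 1), g y z| ≤ C₁ * w ^ (-(s / 2)) := by
    intro y lo hi
    simp only [g, zpow_add₀ (by norm_num : (-1 : ℝ) ≠ 0), mul_assoc, ← mul_sum, abs_mul,
      abs_neg_one_zpow, one_mul]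
    exact h₁ w _ hw (sq_nonneg _) lo hi
  have hC₁ : 0 ≤ C₁ * w ^ (-(s / 2)) := (abs_nonneg _).trans (hline 0 0 0)
  have hEE : |∑ y ∈ E, ∑ z ∈ F, g y z| ≤ w ^ (-(s / 2)) :=
    abs_sum_le_of_card_le_one hE (by positivity) fun y =>
      abs_sum_le_of_card_le_one hF (by positivity) (hpt y)
  have hEP : |∑ y ∈ E, ∑ z ∈ Icc (2 * lo') (2 * hi' + 1), g y z| ≤ C₁ * w ^ (-(s / 2)) :=
    abs_sum_le_of_card_le_one hE hC₁ fun y => hline y lo' hi'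
  have hPE : |∑ y ∈ Icc (2 * lo) (2 * hi + 1), ∑ z ∈ F, g y z| ≤ C₁ * w ^ (-(s / 2)) := by
    rw [sum_comm]; simp_rw [hg _ (_ : ℤ)]
    exact abs_sum_le_of_card_le_one hF hC₁ fun z => hline z lo hi
  have hPP := h₂ w hw lo hi lo' hi'
  rw [sum_union hEd]
  simp_rw [sum_union hFd, sum_add_distrib]
  calc _ ≤ |∑ y ∈ E, ∑ z ∈ F, g y z| + |∑ y ∈ E, ∑ z ∈ Icc (2 * lo') (2 * hi' + 1), g y z| +
        (|∑ y ∈ Icc (2 * lo) (2 * hi + 1), ∑ z ∈ F, g y z| +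
          |∑ y ∈ Icc (2 * lo) (2 * hi + 1), ∑ z ∈ Icc (2 * lo') (2 * hi' + 1), g y z|) := by
        refine (abs_add_le _ _).trans (add_le_add (abs_add_le _ _) (abs_add_le _ _))
    _ ≤ _ := by linarith

noncomputable def latticeTerm (a s : ℝ) (i j k : ℤ) : ℝ :=
  if (i, j, k) = ((0 : ℤ), (0 : ℤ), (0 : ℤ)) then 0
  else (-1 : ℝ) ^ (i + j + k) * (a ^ 2 + (i : ℝ) ^ 2 + (j : ℝ) ^ 2 + (k : ℝ) ^ 2) ^ (-s)

theorem latticeTerm_swap_left (a s : ℝ) (i j k : ℤ) :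
    latticeTerm a s i j k = latticeTerm a s j i k := by
  simp only [latticeTerm, Prod.mk.injEq, and_left_comm (a := i = 0), add_comm i j,
    add_right_comm (a ^ 2) ((i : ℝ) ^ 2)]

theorem latticeTerm_swap_right (a s : ℝ) (i j k : ℤ) :
    latticeTerm a s i j k = latticeTerm a s i k j := by
  simp only [latticeTerm, Prod.mk.injEq, and_comm (a := j = 0), add_right_comm i j,
    add_right_comm _ ((j : ℝ) ^ 2)]

theorem Spi_eq_sum_latticeTerm (a s : ℝ) (I J K : ℕ) :
    Spi a s I J K = ∑ i ∈ Icc (-(I : ℤ)) I, ∑ j ∈ Icc (-(J : ℤ)) J, ∑ k ∈ Icc (-(K : ℤ)) K,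
      latticeTerm a s i j k := by
  rw [Spi, sum_filter, sum_product]
  refine sum_congr rfl fun i _ => ?_
  rw [sum_product]
  refine sum_congr rfl fun j _ => sum_congr rfl fun k _ => ?_
  simp only [latticeTerm, ne_eq]
  split_ifs <;> simp_all [Prod.ext_iff]

theorem sum_sum_sum_insert {M : Type*} [AddCommMonoid M] (f : ℤ → ℤ → ℤ → M)
    {X Y Z : Finset ℤ} {e e' e'' : ℤ} (he : e ∉ X) (he' : e' ∉ Y) (he'' : e'' ∉ Z) :
    ∑ i ∈ insert e X, ∑ j ∈ insert e' Y, ∑ k ∈ insert e'' Z, f i j k =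
      ∑ j ∈ insert e' Y, ∑ k ∈ insert e'' Z, f e j k + ∑ i ∈ X, ∑ k ∈ insert e'' Z, f i e' k +
        ∑ i ∈ X, ∑ j ∈ Y, f i j e'' + ∑ i ∈ X, ∑ j ∈ Y, ∑ k ∈ Z, f i j k := by
  simp only [sum_insert he, sum_insert he', sum_insert he'', sum_add_distrib]
  abel

theorem sum_latticeTerm_eq_sum_Eblock (a s : ℝ) (lo hi lo' hi' lo'' hi'' : ℤ) :
    ∑ i ∈ Icc (2 * lo) (2 * hi + 1), ∑ j ∈ Icc (2 * lo') (2 * hi' + 1),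
      ∑ k ∈ Icc (2 * lo'') (2 * hi'' + 1), latticeTerm a s i j k =
    ∑ v ∈ Icc lo hi ×ˢ Icc lo' hi' ×ˢ Icc lo'' hi'', Eblock a s v.1 v.2.1 v.2.2 := by
  rw [sum_product, sum_Icc_two_mul]
  refine sum_congr rfl fun m _ => ?_
  rw [sum_product]
  calc _ = ∑ i ∈ Icc (2 * m) (2 * m + 1), ∑ n ∈ Icc lo' hi', ∑ j ∈ Icc (2 * n) (2 * n + 1),
        ∑ p ∈ Icc lo'' hi'', ∑ k ∈ Icc (2 * p) (2 * p + 1), latticeTerm a s i j k := by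
        refine sum_congr rfl fun i _ => ?_
        rw [sum_Icc_two_mul]
        exact sum_congr rfl fun n _ => sum_congr rfl fun j _ => sum_Icc_two_mul _ _ _
    _ = _ := by
        rw [sum_comm]
        refine sum_congr rfl fun n _ => ?_
        calc _ = ∑ i ∈ Icc (2 * m) (2 * m + 1), ∑ p ∈ Icc lo'' hi'',
              ∑ j ∈ Icc (2 * n) (2 * n + 1), ∑ k ∈ Icc (2 * p) (2 * p + 1),
                latticeTerm a s i j k := sum_congr rfl fun i _ => sum_comm
          _ = _ := sum_comm

theorem Eblock_eq_cubeDiff (a s : ℝ) {m n p : ℤ} (h : (m, n, p) ≠ 0) :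
    Eblock a s m n p = cubeDiff s [2 * m, 2 * n, 2 * p] (a ^ 2) := by
  rw [← sum_sum_sum_alt_eq_cubeDiff, Eblock]
  refine sum_congr rfl fun i hi => sum_congr rfl fun j hj => sum_congr rfl fun k hk => ?_
  rw [if_neg]
  simp only [mem_Icc] at hi hj hk
  simp only [ne_eq, Prod.ext_iff, Prod.fst_zero, Prod.snd_zero] at h
  simp only [Prod.mk.injEq]
  omega

theorem exists_abs_sum_sum_latticeTerm_le (a : ℝ) {s : ℝ} (hs : 0 < s) :
    ∃ C, ∀ e : ℤ, e ≠ 0 → ∀ A B : Finset ℤ, IsPairedUpToPoint A → IsPairedUpToPoint B →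
      |∑ y ∈ A, ∑ z ∈ B, latticeTerm a s e y z| ≤ C * |(e : ℝ)| ^ (-s) := by
  obtain ⟨C, hC⟩ := exists_abs_sum_sum_alt_le_of_isPairedUpToPoint hs
  have hC0 : 0 ≤ C := by
    simpa using (abs_nonneg _).trans
      (hC 1 le_rfl _ _ (isPairedUpToPoint_Icc 0 0) (isPairedUpToPoint_Icc 0 0))
  refine ⟨C, fun e he A B hA hB => ?_⟩
  have he1 : 1 ≤ |(e : ℝ)| := by exact_mod_cast Int.one_le_abs he
  have hw : 1 ≤ a ^ 2 + (e : ℝ) ^ 2 := by nlinarith [sq_abs (e : ℝ), sq_nonneg a]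
  have hterm : ∀ y z : ℤ, latticeTerm a s e y z = (-1 : ℝ) ^ e *
      ((-1 : ℝ) ^ (y + z) * (a ^ 2 + (e : ℝ) ^ 2 + (y : ℝ) ^ 2 + (z : ℝ) ^ 2) ^ (-s)) := by
    intro y z
    rw [latticeTerm, if_neg (by simp [he]), add_assoc e, zpow_add₀ (by norm_num), mul_assoc]
  simp_rw [hterm, ← mul_sum, abs_mul, abs_neg_one_zpow, one_mul]
  refine (hC _ hw A B hA hB).trans (mul_le_mul_of_nonneg_left ?_ hC0)
  calc (a ^ 2 + (e : ℝ) ^ 2) ^ (-(s / 2)) ≤ (|(e : ℝ)| ^ (2 : ℝ)) ^ (-(s / 2)) := by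
        rw [Real.rpow_two, sq_abs]
        exact Real.rpow_le_rpow_of_nonpos (by positivity) (by nlinarith) (by linarith)
    _ = |(e : ℝ)| ^ (-s) := by rw [← Real.rpow_mul (abs_nonneg _)]; ring_nf

/-- The `n` with `-I ≤ 2n` and `2n + 1 ≤ I` (integer division rounds down). -/
noncomputable def pairIndices (I : ℤ) : Finset ℤ := Icc (-(I / 2)) ((I - 1) / 2)

noncomputable def blockBox (I J K : ℕ) : Finset (ℤ × ℤ × ℤ) :=
  pairIndices I ×ˢ pairIndices J ×ˢ pairIndices K

theorem exists_abs_Spi_sub_sum_Eblock_le (a : ℝ) {s : ℝ} (hs : 0 < s) :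
    ∃ C, ∀ I J K : ℕ, 1 ≤ I → 1 ≤ J → 1 ≤ K →
      |Spi a s I J K - ∑ v ∈ blockBox I J K, Eblock a s v.1 v.2.1 v.2.2| ≤
        C * ((I : ℝ) ^ (-s) + (J : ℝ) ^ (-s) + (K : ℝ) ^ (-s)) := by
  obtain ⟨C, hC⟩ := exists_abs_sum_sum_latticeTerm_le a hs
  have hslab : ∀ {e : ℤ} {N : ℕ}, |e| = N → 1 ≤ N → ∀ A B : Finset ℤ,
      IsPairedUpToPoint A → IsPairedUpToPoint B →
      |∑ y ∈ A, ∑ z ∈ B, latticeTerm a s e y z| ≤ C * (N : ℝ) ^ (-s) := by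
    intro e N he hN A B hA hB
    have he' : |(e : ℝ)| = N := by exact_mod_cast he
    exact he' ▸ hC e (fun h => by simp [h] at he; omega) A B hA hB
  refine ⟨C, fun I J K hI hJ hK => ?_⟩
  obtain ⟨eI, heI, hnI, hRI⟩ := exists_Icc_neg_eq_insert (Int.natCast_nonneg I)
  obtain ⟨eJ, heJ, hnJ, hRJ⟩ := exists_Icc_neg_eq_insert (Int.natCast_nonneg J)
  obtain ⟨eK, heK, hnK, hRK⟩ := exists_Icc_neg_eq_insert (Int.natCast_nonneg K)
  rw [Spi_eq_sum_latticeTerm, hRI, hRJ, hRK, sum_sum_sum_insert _ hnI hnJ hnK, blockBox,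
    pairIndices, pairIndices, pairIndices, ← sum_latticeTerm_eq_sum_Eblock, add_sub_cancel_right,
    mul_add, mul_add]
  have h₁ := hslab heI hI _ _ (isPairedUpToPoint_insert hnJ) (isPairedUpToPoint_insert hnK)
  have hPI := isPairedUpToPoint_Icc (-((I : ℤ) / 2)) (((I : ℤ) - 1) / 2)
  have h₂ := hslab heJ hJ _ _ hPI (isPairedUpToPoint_insert hnK)
  have h₃ := hslab heK hK _ _ hPI (isPairedUpToPoint_Icc (-((J : ℤ) / 2)) (((J : ℤ) - 1) / 2))
  simp_rw [latticeTerm_swap_left _ _ eJ] at h₂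
  simp_rw [latticeTerm_swap_left _ _ eK, latticeTerm_swap_right _ _ _ eK] at h₃
  exact (abs_add_three _ _ _).trans (add_le_add_three h₁ h₂ h₃)

theorem summable_abs_Eblock (a : ℝ) {s : ℝ} (hs : 0 < s) :
    Summable fun v : ℤ × ℤ × ℤ => |Eblock a s v.1 v.2.1 v.2.2| := by
  set P := (ascPochhammer ℝ 3).eval s
  have hP := ascPochhammer_pos 3 s hs
  refine Summable.of_norm_bounded_eventually ((summable_one_add_sq_add_sq_add_sq_rpow_neg
    (t := s + 3 / 2) (by linarith)).mul_left (2 ^ 3 * P * 2 ^ (s + 3 / 2))) ?_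
  filter_upwards [eventually_cofinite_ne 0] with ⟨m, n, p⟩ hv
  have hρ : 1 ≤ (m : ℝ) ^ 2 + (n : ℝ) ^ 2 + (p : ℝ) ^ 2 := by
    have : m ≠ 0 ∨ n ≠ 0 ∨ p ≠ 0 := by
      by_contra! h; exact hv (by simp [h.1, h.2.1, h.2.2])
    have : (1 : ℤ) ≤ m ^ 2 + n ^ 2 + p ^ 2 := by
      rcases this with h | h | h <;> nlinarith [sq_nonneg m, sq_nonneg n, sq_nonneg p,
        pow_pos (abs_pos.2 h) 2, sq_abs m, sq_abs n, sq_abs p]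
    exact_mod_cast this
  have hgap : (m : ℝ) ^ 2 + (n : ℝ) ^ 2 + (p : ℝ) ^ 2 ≤ cubeGap [2 * (m : ℝ), 2 * n, 2 * p] := by
    simp only [cubeGap, List.map_cons, List.map_nil, List.sum_cons, List.sum_nil]
    linarith [sq_le_infDist_Icc_sq m, sq_le_infDist_Icc_sq n, sq_le_infDist_Icc_sq p]
  have hD := abs_cubeDiff_le hs [2 * (m : ℝ), 2 * n, 2 * p] (sq_nonneg a)
    (by linarith [sq_nonneg a])
  simp only [List.length_cons, List.length_nil, zero_add, Nat.reduceAdd, Nat.cast_ofNat] at hD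
  rw [Real.norm_eq_abs, abs_abs, Eblock_eq_cubeDiff a s hv]
  calc _ ≤ 2 ^ 3 * P * (a ^ 2 + cubeGap [2 * (m : ℝ), 2 * n, 2 * p]) ^ (-(s + 3 / 2)) := hD
    _ ≤ 2 ^ 3 * P * ((1 + ((m : ℝ) ^ 2 + (n : ℝ) ^ 2 + (p : ℝ) ^ 2)) / 2) ^ (-(s + 3 / 2)) :=
        mul_le_mul_of_nonneg_left (Real.rpow_le_rpow_of_nonpos (by positivity)
          (by nlinarith [sq_nonneg a]) (by linarith)) (by positivity)
    _ = _ := by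
        rw [Real.div_rpow (by positivity) (by norm_num), Real.rpow_neg (by norm_num : (0:ℝ) ≤ 2),
          div_inv_eq_mul]
        simp only [← add_assoc]
        ring

theorem tendsto_blockBox :
    Tendsto (fun v : ℕ × ℕ × ℕ => blockBox v.1 v.2.1 v.2.2) atTop atTop := by
  refine tendsto_atTop_atTop.2 fun S => ?_
  obtain ⟨R, hR⟩ : ∃ R : ℕ, ∀ x ∈ S, x.1.natAbs ≤ R ∧ x.2.1.natAbs ≤ R ∧ x.2.2.natAbs ≤ R :=
    ⟨S.sup fun x => x.1.natAbs + x.2.1.natAbs + x.2.2.natAbs, fun x hx => by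
      have := le_sup (f := fun x : ℤ × ℤ × ℤ => x.1.natAbs + x.2.1.natAbs + x.2.2.natAbs) hx
      omega⟩
  refine ⟨(2 * R + 1, 2 * R + 1, 2 * R + 1), fun v hv x hx => ?_⟩
  obtain ⟨hv₁, hv₂, hv₃⟩ : 2 * R + 1 ≤ v.1 ∧ 2 * R + 1 ≤ v.2.1 ∧ 2 * R + 1 ≤ v.2.2 := hv
  obtain ⟨h₁, h₂, h₃⟩ := hR x hx
  simp only [blockBox, pairIndices, mem_product, mem_Icc]
  omega

theorem tendsto_Spi (a : ℝ) {s : ℝ} (hs : 0 < s) :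
    Tendsto (fun v : ℕ × ℕ × ℕ => Spi a s v.1 v.2.1 v.2.2) atTop
      (𝓝 (∑' v : ℤ × ℤ × ℤ, Eblock a s v.1 v.2.1 v.2.2)) := by
  obtain ⟨C, hC⟩ := exists_abs_Spi_sub_sum_Eblock_le a hs
  have hpow := (tendsto_rpow_neg_atTop hs).comp tendsto_natCast_atTop_atTop
  have hproj : ∀ π : ℕ × ℕ × ℕ → ℕ, Monotone π → (∀ n, π (n, n, n) = n) →
      Tendsto (fun v => (π v : ℝ) ^ (-s)) atTop (𝓝 0) := fun π hπ hπn =>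
    hpow.comp (tendsto_atTop_atTop_of_monotone hπ fun n => ⟨(n, n, n), (hπn n).ge⟩)
  have herr : Tendsto (fun v : ℕ × ℕ × ℕ =>
      C * ((v.1 : ℝ) ^ (-s) + (v.2.1 : ℝ) ^ (-s) + (v.2.2 : ℝ) ^ (-s))) atTop (𝓝 0) := by
    simpa using (((hproj _ monotone_fst fun _ => rfl).add
      (hproj _ (monotone_fst.comp monotone_snd) fun _ => rfl)).add
      (hproj _ (monotone_snd.comp monotone_snd) fun _ => rfl)).const_mul C
  refine ((summable_abs_iff.1 (summable_abs_Eblock a hs)).hasSum.comp tendsto_blockBox).congr_dist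
    (squeeze_zero' (Eventually.of_forall fun _ => dist_nonneg) ?_ herr)
  filter_upwards [eventually_ge_atTop (1, 1, 1)] with v ⟨h₁, h₂, h₃⟩
  rw [dist_comm, Real.dist_eq]
  exact hC _ _ _ h₁ h₂ h₃

/-- For `s > 0` the family `(E'_{I,J,K}(a,s))_{(I,J,K) ∈ ℤ³}` is absolutely summable, the
limit of `S_{Π_{I,J,K}}(a,s)` by expanding rectangles exists, and it equals
`∑_{(I,J,K) ∈ ℤ³} E'_{I,J,K}(a,s)`. -/
theorem madelung_expanding_rectangles (a s : ℝ) (hs : 0 < s) :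
    Summable (fun p : ℤ × ℤ × ℤ => |Eblock a s p.1 p.2.1 p.2.2|) ∧
      ∃ L : ℝ,
        (∀ ε > (0 : ℝ), ∃ N₀ : ℕ, ∀ I J K : ℕ, N₀ ≤ I → N₀ ≤ J → N₀ ≤ K →
          |Spi a s I J K - L| < ε) ∧
        L = ∑' p : ℤ × ℤ × ℤ, Eblock a s p.1 p.2.1 p.2.2 := by
  refine ⟨summable_abs_Eblock a hs, _, fun ε hε => ?_, rfl⟩
  obtain ⟨N, hN⟩ := Metric.tendsto_atTop.1 (tendsto_Spi a hs) ε hε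
  refine ⟨max N.1 (max N.2.1 N.2.2), fun I J K hI hJ hK => ?_⟩
  simp only [max_le_iff] at hI hJ hK
  exact hN (I, J, K) ⟨hI.1, hJ.2.1, hK.2.2⟩
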